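/- arXiv:1409.3825 — 3 statements merged into one kernel-verified Lean document; each statement's English description precedes it below -/
import Mathlib

section
/- With H₀(f,ξ) = ξ²f/2 + (g²π²/6)f³ and M(U,ξ) the kinetic Maxwellian, one has ∫_ℝ ξ·H₀(M(U,ξ),ξ) dξ = (h u²/2 + g h²)·u, the entropy flux G(U). -/
open MeasureTheory Real

noncomputable def Mx (g h u ξ : ℝ) : ℝ := (1/(g*π)) * Real.sqrt (max 0 (2*g*h - (ξ-u)^2))
noncomputable def H0 (g f ξ : ℝ) : ℝ := ξ^2*f/2 + (g^2*π^2/6)*f^3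
noncomputable def dH0 (g f ξ : ℝ) : ℝ := ξ^2/2 + (g^2*π^2/2)*f^2

/-!
After the shift `ξ = s + u` the Maxwellian is `√(a² - s²) / (gπ)` with `a² = 2gh`, and since
`M³ = (a² - s²) M` the integrand is a cubic polynomial in `s` times `√(a² - s²)`. Its odd part
integrates to zero, and the even moments `∫ √(a² - s²) = πa²/2`, `∫ s² √(a² - s²) = πa⁴/8` follow
by scaling to `a = 1` and substituting `s = sin θ`.
-/

lemma Real.sqrt_max_zero_left (x : ℝ) : √(max 0 x) = √x := by
  rcases le_total 0 x with hx | hx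
  · rw [max_eq_right hx]
  · rw [max_eq_left hx, sqrt_zero, sqrt_eq_zero'.2 hx]

lemma Real.sqrt_pow_three (x : ℝ) : √x ^ 3 = x * √x := by
  rcases le_total 0 x with hx | hx
  · rw [pow_succ, sq_sqrt hx]
  · simp [sqrt_eq_zero'.2 hx]

lemma intervalIntegral.integral_eq_zero_of_odd {f : ℝ → ℝ} (c : ℝ) (hf : ∀ x, f (-x) = -f x) :
    ∫ x in -c..c, f x = 0 := by
  have h := intervalIntegral.integral_comp_neg (a := -c) (b := c) f
  simp only [hf, intervalIntegral.integral_neg, neg_neg] at h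
  linarith

lemma integral_sq_mul_sqrt_one_sub_sq : ∫ t in (-1 : ℝ)..1, t ^ 2 * √(1 - t ^ 2) = π / 8 :=
  calc
    _ = ∫ t in sin (-(π / 2))..sin (π / 2), t ^ 2 * √(1 - t ^ 2) := by
      rw [sin_neg, sin_pi_div_two]
    _ = ∫ x in (-(π / 2))..(π / 2), sin x ^ 2 * √(1 - sin x ^ 2) * cos x :=
      (intervalIntegral.integral_comp_mul_deriv (fun x _ => hasDerivAt_sin x) continuousOn_cos
        (by fun_prop)).symm
    _ = ∫ x in (-(π / 2))..(π / 2), sin x ^ 2 * cos x ^ 2 := by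
      refine intervalIntegral.integral_congr fun x hx => ?_
      rw [Set.uIcc_of_le (by linarith [pi_pos])] at hx
      rw [← cos_eq_sqrt_one_sub_sin_sq hx.1 hx.2]
      ring
    _ = π / 8 := by
      rw [integral_sin_sq_mul_cos_sq, show 4 * (π / 2) = 2 * π by ring,
        show 4 * -(π / 2) = -(2 * π) by ring, sin_neg, sin_two_pi]
      ring

lemma integral_pow_mul_sqrt_sq_sub_sq (n : ℕ) {a : ℝ} (ha : 0 ≤ a) :
    ∫ s in -a..a, s ^ n * √(a ^ 2 - s ^ 2) =
      a ^ (n + 2) * ∫ t in (-1 : ℝ)..1, t ^ n * √(1 - t ^ 2) := by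
  have hscale : ∀ t : ℝ,
      (a * t) ^ n * √(a ^ 2 - (a * t) ^ 2) = a ^ (n + 1) * (t ^ n * √(1 - t ^ 2)) := by
    intro t
    rw [show a ^ 2 - (a * t) ^ 2 = a ^ 2 * (1 - t ^ 2) by ring, sqrt_mul (sq_nonneg a),
      sqrt_sq ha]
    ring
  have h := intervalIntegral.smul_integral_comp_mul_left (a := -1) (b := 1)
    (fun s => s ^ n * √(a ^ 2 - s ^ 2)) a
  simp only [hscale, intervalIntegral.integral_const_mul, smul_eq_mul, mul_neg, mul_one] at h
  rw [← h]
  ring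

lemma integral_cubic_mul_sqrt_sq_sub_sq (c₀ c₁ c₂ c₃ : ℝ) {a : ℝ} (ha : 0 ≤ a) :
    ∫ s in -a..a, (c₀ + c₁ * s + c₂ * s ^ 2 + c₃ * s ^ 3) * √(a ^ 2 - s ^ 2) =
      c₀ * (π * a ^ 2 / 2) + c₂ * (π * a ^ 4 / 8) := by
  have hint : ∀ n : ℕ,
      IntervalIntegrable (fun s : ℝ => s ^ n * √(a ^ 2 - s ^ 2)) volume (-a) a :=
    fun n => (by fun_prop : Continuous _).intervalIntegrable _ _
  have hodd : ∫ s in -a..a, (c₁ * s + c₃ * s ^ 3) * √(a ^ 2 - s ^ 2) = 0 :=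
    intervalIntegral.integral_eq_zero_of_odd a fun s => by ring_nf
  calc _ = (∫ s in -a..a, c₀ * (s ^ 0 * √(a ^ 2 - s ^ 2)) + c₂ * (s ^ 2 * √(a ^ 2 - s ^ 2)))
          + ∫ s in -a..a, (c₁ * s + c₃ * s ^ 3) * √(a ^ 2 - s ^ 2) := by
        rw [← intervalIntegral.integral_add (((hint 0).const_mul c₀).add ((hint 2).const_mul c₂))
          ((by fun_prop : Continuous fun s : ℝ => (c₁ * s + c₃ * s ^ 3) * √(a ^ 2 - s ^ 2)
            ).intervalIntegrable _ _)]
        congr 1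
        funext s
        ring
    _ = _ := by
      rw [hodd, add_zero,
        intervalIntegral.integral_add ((hint 0).const_mul c₀) ((hint 2).const_mul c₂),
        intervalIntegral.integral_const_mul, intervalIntegral.integral_const_mul,
        integral_pow_mul_sqrt_sq_sub_sq 0 ha, integral_pow_mul_sqrt_sq_sub_sq 2 ha,
        integral_sq_mul_sqrt_one_sub_sq]
      simp only [pow_zero, one_mul, integral_sqrt_one_sub_sq]
      ring

lemma integral_mul_sqrt_sq_sub_sq_eq_intervalIntegral (f : ℝ → ℝ) {a : ℝ} (ha : 0 ≤ a) :
    ∫ s, f s * √(a ^ 2 - s ^ 2) = ∫ s in -a..a, f s * √(a ^ 2 - s ^ 2) := by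
  refine (intervalIntegral.integral_eq_integral_of_support_subset fun s hs => ?_).symm
  have hpos : 0 < a ^ 2 - s ^ 2 := sqrt_ne_zero'.1 (right_ne_zero_of_mul hs)
  have habs : |s| < a := abs_lt_of_sq_lt_sq (by linarith) ha
  exact ⟨(abs_lt.1 habs).1, (abs_lt.1 habs).2.le⟩

lemma Mx_add_right (g h u s : ℝ) : Mx g h u (s + u) = √(2 * g * h - s ^ 2) / (g * π) := by
  rw [Mx, add_sub_cancel_right, sqrt_max_zero_left, one_div_mul_eq_div]

theorem kinetic_entropy_flux_integral (g h u : ℝ) (hg : 0 < g) (hh : 0 ≤ h) :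
    (∫ ξ : ℝ, ξ * H0 g (Mx g h u ξ) ξ) = (h * u^2 / 2 + g * h^2) * u := by
  obtain ⟨a, ha, ha2⟩ : ∃ a : ℝ, 0 ≤ a ∧ a ^ 2 = 2 * g * h :=
    ⟨√(2 * g * h), sqrt_nonneg _, sq_sqrt (by positivity)⟩
  have hgπ : g * π ≠ 0 := mul_ne_zero hg.ne' pi_ne_zero
  calc ∫ ξ, ξ * H0 g (Mx g h u ξ) ξ
      = ∫ s, (s + u) * H0 g (Mx g h u (s + u)) (s + u) := (integral_add_right_eq_self _ u).symm
    _ = ∫ s, ((u ^ 3 / (2 * g * π) + a ^ 2 * u / (6 * g * π))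
          + (3 * u ^ 2 / (2 * g * π) + a ^ 2 / (6 * g * π)) * s
          + 4 * u / (3 * g * π) * s ^ 2 + 1 / (3 * g * π) * s ^ 3) * √(a ^ 2 - s ^ 2) := by
      congr 1
      funext s
      rw [Mx_add_right, ← ha2, H0, div_pow, sqrt_pow_three]
      field_simp
      ring
    _ = (h * u^2 / 2 + g * h^2) * u := by
      rw [integral_mul_sqrt_sq_sub_sq_eq_intervalIntegral _ ha,
        integral_cubic_mul_sqrt_sq_sub_sq _ _ _ _ ha, show a ^ 4 = (a ^ 2) ^ 2 by ring, ha2]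
      field_simp
      ring
end

section
/- If M(U,ξ) > 0 then ∂_f H₀(M(U,ξ),ξ) = η'(U)·(1,ξ)ᵀ = gh − u²/2 + ξu, and if M(U,ξ) = 0 then ∂_f H₀(M(U,ξ),ξ) = ξ²/2 ≥ gh − u²/2 + ξu. -/
open MeasureTheory Real

/-! Since `(gπ M)² = (2gh − (ξ−u)²)₊` and `2gh − (ξ−u)² = 2(gh − u²/2 + ξu) − ξ²`, we get
`∂_f H₀(M, ξ) = ξ²/2 + (2gh − (ξ−u)²)₊ / 2 = max (ξ²/2) (gh − u²/2 + ξu)`. -/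

theorem Mx_sq (g h u ξ : ℝ) :
    Mx g h u ξ ^ 2 = max 0 (2*g*h - (ξ-u)^2) / (g*π) ^ 2 := by
  rw [Mx, mul_pow, sq_sqrt (le_max_left _ _)]
  ring

theorem Mx_ne_zero_iff {g h u ξ : ℝ} :
    Mx g h u ξ ≠ 0 ↔ g ≠ 0 ∧ 0 < 2*g*h - (ξ-u)^2 := by
  simp only [Mx, ne_eq, mul_eq_zero, one_div, inv_eq_zero, pi_ne_zero, or_false, not_or,
    sqrt_eq_zero', not_le, lt_max_iff, lt_irrefl, false_or]

theorem dH0_Mx {g : ℝ} (hg : g ≠ 0) (h u ξ : ℝ) :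
    dH0 g (Mx g h u ξ) ξ = ξ^2/2 + max 0 (2*g*h - (ξ-u)^2) / 2 := by
  rw [dH0, Mx_sq]
  field_simp

theorem mul_le_sq_div_two_of_Mx_eq_zero {g h u ξ : ℝ} (hM : Mx g h u ξ = 0) :
    g * h ≤ (ξ-u)^2 / 2 := by
  rcases eq_or_ne g 0 with rfl | hg
  · nlinarith [sq_nonneg (ξ - u)]
  · have hr : ¬0 < 2*g*h - (ξ-u)^2 := fun hr => Mx_ne_zero_iff.mpr ⟨hg, hr⟩ hM
    linarith [not_lt.mp hr]

theorem dH0_at_maxwellian_general (g h u ξ : ℝ) :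
    (0 < Mx g h u ξ → dH0 g (Mx g h u ξ) ξ = g*h - u^2/2 + ξ*u) ∧
    (Mx g h u ξ = 0 → dH0 g (Mx g h u ξ) ξ = ξ^2/2 ∧ g*h - u^2/2 + ξ*u ≤ ξ^2/2) := by
  refine ⟨fun hM => ?_, fun hM => ⟨by simp [dH0, hM], ?_⟩⟩
  · obtain ⟨hg, hr⟩ := Mx_ne_zero_iff.mp hM.ne'
    rw [dH0_Mx hg, max_eq_right hr.le]
    ring
  · linarith [mul_le_sq_div_two_of_Mx_eq_zero hM]

theorem dH0_at_maxwellian (g h u ξ : ℝ) (hg : 0 < g) (hh : 0 ≤ h) :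
    (0 < Mx g h u ξ → dH0 g (Mx g h u ξ) ξ = g*h - u^2/2 + ξ*u) ∧
    (Mx g h u ξ = 0 → dH0 g (Mx g h u ξ) ξ = ξ^2/2 ∧ g*h - u^2/2 + ξ*u ≤ ξ^2/2) :=
  dH0_at_maxwellian_general g h u ξ
end

section
/- Fully discrete kinetic entropy inequality without topography: under the CFL condition σ|ξ| ≤ 1 on the supports of M_{i−1}, M_i, M_{i+1}, the update f_i^{n+1−} of the flux-vector-splitting kinetic scheme satisfies H₀(f_i^{n+1−},ξ) ≤ H₀(M_i,ξ) − σξ( 1_{ξ>0}H₀(M_i,ξ) + 1_{ξ<0}H₀(M_{i+1},ξ) − 1_{ξ<0}H₀(M_i,ξ) − 1_{ξ>0}H₀(M_{i−1},ξ) ). -/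
open MeasureTheory Real

lemma Mx_nonneg (g h u ξ : ℝ) (hg : 0 < g) : 0 ≤ Mx g h u ξ := by
  unfold Mx
  have : 0 < g * π := mul_pos hg Real.pi_pos
  positivity

lemma cube_convex (a b θ : ℝ) (ha : 0 ≤ a) (hb : 0 ≤ b) (hθ : 0 ≤ θ) (hθ1 : θ ≤ 1) :
    (θ*a + (1-θ)*b)^3 ≤ θ*a^3 + (1-θ)*b^3 := by
  have ht : 0 ≤ θ * (1-θ) := mul_nonneg hθ (by linarith)
  have hinner : 0 ≤ θ*(a-b)^3 + (a+2*b)*(a-b)^2 := by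
    rcases le_total b a with h | h
    · have h1 : 0 ≤ (a-b)^3 := pow_nonneg (by linarith) 3
      have h2 : 0 ≤ (a+2*b)*(a-b)^2 := by positivity
      nlinarith
    · have heq : θ*(a-b)^3 + (a+2*b)*(a-b)^2 = (1-θ)*(b-a)^3 + (2*a+b)*(b-a)^2 := by ring
      rw [heq]
      have h1 : 0 ≤ (b-a)^3 := pow_nonneg (by linarith) 3
      have h2 : 0 ≤ (2*a+b)*(b-a)^2 := by positivity
      nlinarith
  nlinarith [mul_nonneg ht hinner]

lemma H0_convex (g a b θ ξ : ℝ) (ha : 0 ≤ a) (hb : 0 ≤ b) (hθ : 0 ≤ θ) (hθ1 : θ ≤ 1) :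
    H0 g (θ*a + (1-θ)*b) ξ ≤ θ * H0 g a ξ + (1-θ) * H0 g b ξ := by
  unfold H0
  have h3 := cube_convex a b θ ha hb hθ hθ1
  have hc : 0 ≤ g^2*π^2/6 := by positivity
  nlinarith [mul_le_mul_of_nonneg_left h3 hc]

theorem fully_discrete_entropy_no_topo (g σ : ℝ) (hm hc hp um uc up : ℝ)
    (hg : 0 < g) (hσ : 0 < σ) (hhm : 0 ≤ hm) (hhc : 0 ≤ hc) (hhp : 0 ≤ hp)
    (hcfl : ∀ ξ, (0 < Mx g hm um ξ ∨ 0 < Mx g hc uc ξ ∨ 0 < Mx g hp up ξ) → σ * |ξ| ≤ 1) :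
    ∀ ξ : ℝ,
      H0 g (if ξ < 0 then (1 + σ*ξ) * Mx g hc uc ξ - σ*ξ * Mx g hp up ξ
            else (1 - σ*ξ) * Mx g hc uc ξ + σ*ξ * Mx g hm um ξ) ξ
      ≤ H0 g (Mx g hc uc ξ) ξ
        - σ*ξ * ((if 0 < ξ then H0 g (Mx g hc uc ξ) ξ else 0)
                 + (if ξ < 0 then H0 g (Mx g hp up ξ) ξ else 0)
                 - (if ξ < 0 then H0 g (Mx g hc uc ξ) ξ else 0)
                 - (if 0 < ξ then H0 g (Mx g hm um ξ) ξ else 0)) := by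
  intro ξ
  have hMm := Mx_nonneg g hm um ξ hg
  have hMc := Mx_nonneg g hc uc ξ hg
  have hMp := Mx_nonneg g hp up ξ hg
  by_cases hcflξ : σ * |ξ| ≤ 1
  · rcases lt_trichotomy ξ 0 with hξ | hξ | hξ
    · simp only [if_pos hξ, if_neg (not_lt.2 hξ.le)]
      have hθ : 0 ≤ 1 + σ*ξ := by
        have : σ * |ξ| = -(σ*ξ) := by rw [abs_of_neg hξ]; ring
        linarith [this ▸ hcflξ]
      have hθ1 : 1 + σ*ξ ≤ 1 := by nlinarith
      have := H0_convex g (Mx g hc uc ξ) (Mx g hp up ξ) (1 + σ*ξ) ξ hMc hMp hθ hθ1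
      have heq : (1 + σ*ξ) * Mx g hc uc ξ - σ*ξ * Mx g hp up ξ
          = (1 + σ*ξ) * Mx g hc uc ξ + (1 - (1 + σ*ξ)) * Mx g hp up ξ := by ring
      rw [heq]
      calc H0 g ((1 + σ*ξ) * Mx g hc uc ξ + (1 - (1 + σ*ξ)) * Mx g hp up ξ) ξ
          ≤ (1 + σ*ξ) * H0 g (Mx g hc uc ξ) ξ + (1 - (1 + σ*ξ)) * H0 g (Mx g hp up ξ) ξ := this
        _ = _ := by ring
    · subst hξ
      simp [H0]
    · simp only [if_neg (not_lt.2 hξ.le), if_pos hξ]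
      have habs : σ * |ξ| = σ*ξ := by rw [abs_of_pos hξ]
      have hθ : 0 ≤ 1 - σ*ξ := by linarith [habs ▸ hcflξ]
      have hθ1 : 1 - σ*ξ ≤ 1 := by nlinarith
      have := H0_convex g (Mx g hc uc ξ) (Mx g hm um ξ) (1 - σ*ξ) ξ hMc hMm hθ hθ1
      have heq : (1 - σ*ξ) * Mx g hc uc ξ + σ*ξ * Mx g hm um ξ
          = (1 - σ*ξ) * Mx g hc uc ξ + (1 - (1 - σ*ξ)) * Mx g hm um ξ := by ring
      rw [heq]
      calc H0 g ((1 - σ*ξ) * Mx g hc uc ξ + (1 - (1 - σ*ξ)) * Mx g hm um ξ) ξ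
          ≤ (1 - σ*ξ) * H0 g (Mx g hc uc ξ) ξ + (1 - (1 - σ*ξ)) * H0 g (Mx g hm um ξ) ξ := this
        _ = _ := by ring
  · have hz : Mx g hm um ξ = 0 ∧ Mx g hc uc ξ = 0 ∧ Mx g hp up ξ = 0 := by
      refine ⟨le_antisymm ?_ hMm, le_antisymm ?_ hMc, le_antisymm ?_ hMp⟩ <;>
        by_contra h <;> push_neg at h <;>
        exact hcflξ (hcfl ξ (by tauto))
    obtain ⟨h1, h2, h3⟩ := hz
    simp [h1, h2, h3, H0]
end
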